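/- If a sequence (K_n, d^{K_n}) of nonempty compact metric spaces converges to a nonempty compact metric space (K, d^K) in the Gromov–Hausdorff topology (i.e., the Gromov–Hausdorff distance from K_n to K tends to 0), then for every ε > 0 one has N_{d^K}(K, ε) ≤ liminf_{n→∞} N_{d^{K_n}}(K_n, ε). -/
import Mathlib


open Filter Set
open scoped ENNReal Topology

universe u v

/-- The metric entropy `N_d(K, ε)` of a subset `K` of a metric space: the minimal cardinality
of a finite subset `A ⊆ K` such that every point of `K` is within distance `ε` of `A`. -/
noncomputable def coveringNumber {S : Type*} [MetricSpace S] (K : Set S) (ε : ℝ) : ℕ :=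
  sInf {n : ℕ | ∃ A : Finset S, ↑A ⊆ K ∧ A.card = n ∧ ∀ x ∈ K, ∃ a ∈ A, dist x a ≤ ε}

lemma coveringSet_nonempty (S : Type*) [MetricSpace S] [CompactSpace S] {ε : ℝ} (hε : 0 < ε) :
    {n : ℕ | ∃ A : Finset S, ↑A ⊆ (univ : Set S) ∧ A.card = n ∧
      ∀ x ∈ (univ : Set S), ∃ a ∈ A, dist x a ≤ ε}.Nonempty := by
  obtain ⟨t, -, htfin, hcov⟩ := (totallyBounded_iff_subset.1
    (isCompact_univ.totallyBounded : TotallyBounded (univ : Set S)))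
    _ (Metric.dist_mem_uniformity hε)
  refine ⟨htfin.toFinset.card, htfin.toFinset, by simp, rfl, fun x _ => ?_⟩
  obtain ⟨a, ha, hxa⟩ := Set.mem_iUnion₂.1 (hcov (Set.mem_univ x))
  exact ⟨a, htfin.mem_toFinset.2 ha, le_of_lt hxa⟩

lemma coveringNumber_witness (S : Type*) [MetricSpace S] [CompactSpace S] {ε : ℝ} (hε : 0 < ε) :
    ∃ A : Finset S, A.card = coveringNumber (univ : Set S) ε ∧
      ∀ x : S, ∃ a ∈ A, dist x a ≤ ε := by
  have := Nat.sInf_mem (coveringSet_nonempty S hε)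
  obtain ⟨A, -, hcard, hcov⟩ := this
  exact ⟨A, hcard, fun x => hcov x (mem_univ x)⟩

lemma coveringNumber_le_card (S : Type*) [MetricSpace S] {ε : ℝ} (A : Finset S)
    (hcov : ∀ x : S, ∃ a ∈ A, dist x a ≤ ε) :
    coveringNumber (univ : Set S) ε ≤ A.card :=
  Nat.sInf_le ⟨A, by simp, rfl, fun x _ => hcov x⟩

lemma coveringNumber_anti (S : Type*) [MetricSpace S] [CompactSpace S] {ε ε' : ℝ} (hε : 0 < ε)
    (h : ε ≤ ε') : coveringNumber (univ : Set S) ε' ≤ coveringNumber (univ : Set S) ε := by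
  obtain ⟨A, hcard, hcov⟩ := coveringNumber_witness S hε
  rw [← hcard]
  exact coveringNumber_le_card S A fun x => by
    obtain ⟨a, ha, hxa⟩ := hcov x; exact ⟨a, ha, hxa.trans h⟩

/-- Transfer of coverings along a Gromov–Hausdorff coupling. -/
lemma coveringNumber_le_of_ghDist (X : Type u) (Y : Type v) [MetricSpace X] [CompactSpace X]
    [Nonempty X] [MetricSpace Y] [CompactSpace Y] [Nonempty Y] {ε : ℝ} (hε : 0 < ε) :
    coveringNumber (univ : Set Y) (ε + 2 * GromovHausdorff.ghDist X Y) ≤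
      coveringNumber (univ : Set X) ε := by
  set δ := GromovHausdorff.ghDist X Y with hδ
  set f := GromovHausdorff.optimalGHInjl X Y
  set g := GromovHausdorff.optimalGHInjr X Y
  have hf : Isometry f := GromovHausdorff.isometry_optimalGHInjl X Y
  have hg : Isometry g := GromovHausdorff.isometry_optimalGHInjr X Y
  have hH : Metric.hausdorffDist (range f) (range g) = δ :=
    GromovHausdorff.hausdorffDist_optimal
  classical
  have hne : EMetric.hausdorffEdist (range f) (range g) ≠ ⊤ :=
    Metric.hausdorffEdist_ne_top_of_nonempty_of_bounded (range_nonempty f) (range_nonempty g)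
      (isCompact_range hf.continuous).isBounded (isCompact_range hg.continuous).isBounded
  -- for each point of X, choose a point of Y at distance ≤ δ in the coupling
  have hchoose : ∀ x : X, ∃ b : Y, dist (f x) (g b) ≤ δ := by
    intro x
    have h1 : Metric.infDist (f x) (range g) ≤ δ := by
      rw [← hH]
      exact Metric.infDist_le_hausdorffDist_of_mem (mem_range_self x) hne
    obtain ⟨y, hy, hdy⟩ := (isCompact_range hg.continuous).exists_infDist_eq_dist
      (range_nonempty g) (f x)
    obtain ⟨b, rfl⟩ := hy
    exact ⟨b, by rw [← hdy]; exact h1⟩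
  choose φ hφ using hchoose
  obtain ⟨A, hcard, hcov⟩ := coveringNumber_witness X hε
  rw [← hcard]
  calc coveringNumber (univ : Set Y) (ε + 2 * δ) ≤ (A.image φ).card := by
        apply coveringNumber_le_card
        intro y
        -- find x in X close to y in the coupling
        have h1 : Metric.infDist (g y) (range f) ≤ δ := by
          rw [← hH, Metric.hausdorffDist_comm]
          exact Metric.infDist_le_hausdorffDist_of_mem (mem_range_self y)
            (by rwa [EMetric.hausdorffEdist_comm])
        obtain ⟨z, hz, hdz⟩ := (isCompact_range hf.continuous).exists_infDist_eq_dist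
          (range_nonempty f) (g y)
        obtain ⟨x, rfl⟩ := hz
        obtain ⟨a, haA, hxa⟩ := hcov x
        refine ⟨φ a, Finset.mem_image_of_mem φ haA, ?_⟩
        have : dist (g y) (g (φ a)) ≤ δ + ε + δ := by
          calc dist (g y) (g (φ a)) ≤ dist (g y) (f x) + dist (f x) (f a) + dist (f a) (g (φ a)) :=
                dist_triangle4 _ _ _ _
            _ ≤ δ + ε + δ := by
                gcongr
                · rw [← hdz]; exact h1
                · rw [hf.dist_eq]; exact hxa
                · exact hφ a
        rw [← hg.dist_eq] ; linarith
    _ ≤ A.card := Finset.card_image_le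

/-- Right stability of the covering number: for compact spaces the covering number at radius `ε`
is attained at some slightly larger radius as well. -/
lemma exists_eta (S : Type v) [MetricSpace S] [CompactSpace S] [Nonempty S] {ε : ℝ}
    (hε : 0 < ε) : ∃ η > 0, coveringNumber (univ : Set S) ε ≤
      coveringNumber (univ : Set S) (ε + η) := by
  classical
  by_contra hcon
  push_neg at hcon
  set N := coveringNumber (univ : Set S) ε with hN
  -- for each k, a covering of cardinality ≤ N - 1 at radius ε + 1/(k+1)
  have hk : ∀ k : ℕ, ∃ A : Finset S, A.card ≤ N - 1 ∧ A.Nonempty ∧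
      ∀ x : S, ∃ a ∈ A, dist x a ≤ ε + 1 / (k + 1) := by
    intro k
    have hpos : (0:ℝ) < ε + 1 / (k + 1) := by positivity
    obtain ⟨A, hcard, hcov⟩ := coveringNumber_witness S hpos
    have hlt : coveringNumber (univ : Set S) (ε + 1 / (k + 1)) < N :=
      hcon (1 / (k + 1)) (by positivity)
    obtain ⟨x⟩ := (inferInstance : Nonempty S)
    obtain ⟨a, ha, -⟩ := hcov x
    exact ⟨A, by omega, ⟨a, ha⟩, hcov⟩
  choose A hAcard hAne hAcov using hk
  set m := N - 1 with hm
  -- make tuples in S^m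
  have htuple : ∀ k : ℕ, ∃ t : Fin m → S, ∀ x : S, ∃ i, dist x (t i) ≤ ε + 1 / (k + 1) := by
    intro k
    obtain ⟨a0, ha0⟩ := hAne k
    have hmpos : 0 < m := lt_of_lt_of_le (hAne k).card_pos (hAcard k)
    refine ⟨fun i => ((A k).toList).getD i a0, fun x => ?_⟩
    obtain ⟨a, haA, hxa⟩ := hAcov k x
    have : a ∈ (A k).toList := Finset.mem_toList.2 haA
    obtain ⟨j, hj, hget⟩ := List.getElem_of_mem this
    have hjlt : j < m := lt_of_lt_of_le (by simpa using hj) (by simpa using hAcard k)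
    refine ⟨⟨j, hjlt⟩, ?_⟩
    have hga : ((A k).toList).getD j a0 = a := by
      rw [List.getD_eq_getElem _ _ (by simpa using hj)]
      exact hget
    show dist x (((A k).toList).getD j a0) ≤ ε + 1 / (k + 1)
    rw [hga]; exact hxa
  choose t ht using htuple
  -- compactness of S^m: extract a convergent subsequence
  obtain ⟨a, -, ψ, hψ, hlim⟩ := isCompact_univ.tendsto_subseq (x := t) (fun k => mem_univ _)
  -- the limit tuple is an ε-covering
  have hcov : ∀ x : S, ∃ i, dist x (a i) ≤ ε := by
    intro x
    have hik : ∀ k : ℕ, ∃ i, dist x (t (ψ k) i) ≤ ε + 1 / (ψ k + 1) := fun k => ht (ψ k) x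
    choose ik hik using hik
    obtain ⟨i, hi⟩ := Finite.exists_infinite_fiber ik
    have hfreq : ∃ᶠ k in atTop, dist x (t (ψ k) i) ≤ ε + 1 / (ψ k + 1) := by
      have : ∃ᶠ k in atTop, ik k = i := Nat.frequently_atTop_iff_infinite.2 (Set.infinite_coe_iff.1 hi)
      exact this.mono (fun k hk => by rw [← hk]; exact hik k)
    obtain ⟨ρ, hρ, hρP⟩ := Filter.extraction_of_frequently_atTop hfreq
    refine ⟨i, ?_⟩
    have h1 : Tendsto (fun k => dist x (t (ψ (ρ k)) i)) atTop (𝓝 (dist x (a i))) := by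
      have hcoord : Tendsto (fun k => t (ψ k) i) atTop (𝓝 (a i)) :=
        (tendsto_pi_nhds.1 hlim) i
      exact ((continuous_dist.comp (Continuous.prodMk_right x)).continuousAt.tendsto.comp
        (hcoord.comp hρ.tendsto_atTop))
    have h2 : Tendsto (fun k => ε + 1 / ((ψ (ρ k) : ℝ) + 1)) atTop (𝓝 (ε + 0)) := by
      apply Tendsto.const_add
      exact tendsto_one_div_add_atTop_nhds_zero_nat.comp ((hψ.comp hρ).tendsto_atTop)
    have := le_of_tendsto_of_tendsto' h1 h2 (fun k => by exact_mod_cast hρP k)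
    simpa using this
  -- contradiction: we found a covering of cardinality < N
  choose c hc using hcov
  have hle : coveringNumber (univ : Set S) ε ≤ (Finset.univ.image a : Finset S).card :=
    coveringNumber_le_card S _ (fun x => ⟨a (c x), Finset.mem_image_of_mem a (Finset.mem_univ _),
      hc x⟩)
  have hcard : (Finset.univ.image a : Finset S).card ≤ m :=
    (Finset.card_image_le).trans (by simp)
  have hNpos : 1 ≤ N := by
    obtain ⟨x⟩ := (inferInstance : Nonempty S)
    by_contra h
    have h0 : N = 0 := by omega
    obtain ⟨B, hB, hBcov⟩ := coveringNumber_witness S hε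
    rw [← hN, h0, Finset.card_eq_zero] at hB
    obtain ⟨b, hb, -⟩ := hBcov x
    rw [hB] at hb
    exact absurd hb (Finset.notMem_empty b)
  omega

/-- (Theorem: lower semicontinuity of metric entropies along Gromov–Hausdorff convergence.)
If nonempty compact metric spaces `K n` converge to `L` in the Gromov–Hausdorff topology,
then `N(L, ε) ≤ liminf_n N(K n, ε)` for every `ε > 0`. -/
theorem stmt2 (K : ℕ → Type u) [∀ n, MetricSpace (K n)] [∀ n, CompactSpace (K n)]
    [∀ n, Nonempty (K n)] (L : Type v) [MetricSpace L] [CompactSpace L] [Nonempty L]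
    (hconv : Tendsto (fun n => GromovHausdorff.ghDist (K n) L) atTop (𝓝 0))
    (ε : ℝ) (hε : 0 < ε) :
    (coveringNumber (Set.univ : Set L) ε : ℝ≥0∞) ≤
      Filter.liminf (fun n => (coveringNumber (Set.univ : Set (K n)) ε : ℝ≥0∞)) atTop := by
  obtain ⟨η, hη, hηle⟩ := exists_eta L hε
  have hev : ∀ᶠ n in atTop, GromovHausdorff.ghDist (K n) L < η / 2 := by
    have := hconv.eventually (eventually_lt_nhds (show (0:ℝ) < η / 2 by linarith))
    simpa using this
  apply Filter.le_liminf_of_le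
  · isBoundedDefault
  refine hev.mono (fun n hn => ?_)
  have hδ0 : 0 ≤ GromovHausdorff.ghDist (K n) L := by rw [GromovHausdorff.ghDist]; exact dist_nonneg
  have h1 : coveringNumber (univ : Set L) (ε + 2 * GromovHausdorff.ghDist (K n) L) ≤
      coveringNumber (univ : Set (K n)) ε := coveringNumber_le_of_ghDist (K n) L hε
  have h2 : coveringNumber (univ : Set L) (ε + η) ≤
      coveringNumber (univ : Set L) (ε + 2 * GromovHausdorff.ghDist (K n) L) :=
    coveringNumber_anti L (by positivity) (by linarith)
  have : coveringNumber (univ : Set L) ε ≤ coveringNumber (univ : Set (K n)) ε := by omega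
  exact_mod_cast this
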